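/- In an NBC1 configuration whose underlying paths form an optimal Steiner forest and whose three paths q_1,q_2,q_3 are tight alternatives with respect to a feasible LP(F) cost-share assignment in which all commonly used edges are completely paid, the following hold: (i) every edge substituted by q_1 or by q_3 is completely paid; (ii) the player whose terminal pair is (u,v) fully pays (her cost share equals the full edge cost on) every commonly used edge that is substituted by q_1 but not by q_3. -/

import Mathlib

namespace NDG

variable {V : Type*} [DecidableEq V]

/-- Total cost of a finite set of edges. -/
def cost (c : Sym2 V → ℝ) (F : Finset (Sym2 V)) : ℝ := ∑ e ∈ F, c e

/-- A Steiner forest: an acyclic set of edges of `G` connecting both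
terminal pairs. -/
def IsSteinerForest (G : SimpleGraph V) (s₁ t₁ s₂ t₂ : V) (F : Finset (Sym2 V)) : Prop :=
  (↑F ⊆ G.edgeSet) ∧
  (SimpleGraph.fromEdgeSet (↑F : Set (Sym2 V))).IsAcyclic ∧
  (∃ p : G.Walk s₁ t₁, p.IsPath ∧ ∀ e ∈ p.edges, e ∈ F) ∧
  (∃ p : G.Walk s₂ t₂, p.IsPath ∧ ∀ e ∈ p.edges, e ∈ F)

/-- An optimal Steiner forest: one of minimum total cost. -/
def IsOptimalSteinerForest (G : SimpleGraph V) (s₁ t₁ s₂ t₂ : V) (c : Sym2 V → ℝ)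
    (F : Finset (Sym2 V)) : Prop :=
  IsSteinerForest G s₁ t₁ s₂ t₂ F ∧
  ∀ F', IsSteinerForest G s₁ t₁ s₂ t₂ F' → cost c F ≤ cost c F'

/-- A strategy of a player: a simple path between her terminals. -/
abbrev Strat (G : SimpleGraph V) (s t : V) := {p : G.Walk s t // p.IsPath}

/-- A cost sharing protocol: cost shares for both players on every edge,
depending on the chosen strategy profile. -/
abbrev Protocol (G : SimpleGraph V) (s₁ t₁ s₂ t₂ : V) :=
  Strat G s₁ t₁ → Strat G s₂ t₂ → Fin 2 → Sym2 V → ℝ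

/-- The set of players using edge `e` in the profile `(P₁, P₂)`. -/
def usedBy {G : SimpleGraph V} {s₁ t₁ s₂ t₂ : V}
    (P₁ : Strat G s₁ t₁) (P₂ : Strat G s₂ t₂) (e : Sym2 V) : Finset (Fin 2) :=
  (if e ∈ P₁.1.edges then {0} else ∅) ∪ (if e ∈ P₂.1.edges then {1} else ∅)

/-- The total cost player 1 pays. -/
def cost₁ {G : SimpleGraph V} {s₁ t₁ s₂ t₂ : V} (Ξ : Protocol G s₁ t₁ s₂ t₂)
    (P₁ : Strat G s₁ t₁) (P₂ : Strat G s₂ t₂) : ℝ :=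
  ∑ e ∈ P₁.1.edges.toFinset, Ξ P₁ P₂ 0 e

/-- The total cost player 2 pays. -/
def cost₂ {G : SimpleGraph V} {s₁ t₁ s₂ t₂ : V} (Ξ : Protocol G s₁ t₁ s₂ t₂)
    (P₁ : Strat G s₁ t₁) (P₂ : Strat G s₂ t₂) : ℝ :=
  ∑ e ∈ P₂.1.edges.toFinset, Ξ P₁ P₂ 1 e

/-- Pure Nash equilibrium of the two-player game induced by the protocol `Ξ`. -/
def IsPNE {G : SimpleGraph V} {s₁ t₁ s₂ t₂ : V} (Ξ : Protocol G s₁ t₁ s₂ t₂)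
    (P₁ : Strat G s₁ t₁) (P₂ : Strat G s₂ t₂) : Prop :=
  (∀ Q₁, cost₁ Ξ P₁ P₂ ≤ cost₁ Ξ Q₁ P₂) ∧ (∀ Q₂, cost₂ Ξ P₁ P₂ ≤ cost₂ Ξ P₁ Q₂)

/-- A separable cost sharing protocol: nonnegative, budget-balanced, stable and
separable (cost shares on an edge depend only on the set of players using it). -/
structure IsSeparable {G : SimpleGraph V} {s₁ t₁ s₂ t₂ : V} (c : Sym2 V → ℝ)
    (Ξ : Protocol G s₁ t₁ s₂ t₂) : Prop where
  nonneg : ∀ P₁ P₂ i e, 0 ≤ Ξ P₁ P₂ i e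
  budget : ∀ P₁ P₂ e, (usedBy P₁ P₂ e).Nonempty →
    ∑ i ∈ usedBy P₁ P₂ e, Ξ P₁ P₂ i e = c e
  stable : ∃ P₁ P₂, IsPNE Ξ P₁ P₂
  separable : ∀ P₁ P₂ Q₁ Q₂ e, usedBy P₁ P₂ e = usedBy Q₁ Q₂ e →
    ∀ i, Ξ P₁ P₂ i e = Ξ Q₁ Q₂ i e

/-- A Steiner forest `F` is enforceable if the profile of the unique paths of
the two players inside `F` is a pure Nash equilibrium of the game induced by
some separable cost sharing protocol. -/
def Enforceable (G : SimpleGraph V) (s₁ t₁ s₂ t₂ : V) (c : Sym2 V → ℝ)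
    (F : Finset (Sym2 V)) : Prop :=
  ∃ (P₁ : Strat G s₁ t₁) (P₂ : Strat G s₂ t₂),
    (∀ e ∈ P₁.1.edges, e ∈ F) ∧ (∀ e ∈ P₂.1.edges, e ∈ F) ∧
    (∀ Q₁ : Strat G s₁ t₁, (∀ e ∈ Q₁.1.edges, e ∈ F) → Q₁ = P₁) ∧
    (∀ Q₂ : Strat G s₂ t₂, (∀ e ∈ Q₂.1.edges, e ∈ F) → Q₂ = P₂) ∧
    ∃ Ξ : Protocol G s₁ t₁ s₂ t₂, IsSeparable c Ξ ∧ IsPNE Ξ P₁ P₂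

/-- `(G,(s₁,t₁),(s₂,t₂))` is efficient: for every nonnegative cost function
some optimal Steiner forest is enforceable (the PoS is 1). -/
def Efficient (G : SimpleGraph V) (s₁ t₁ s₂ t₂ : V) : Prop :=
  ∀ c : Sym2 V → ℝ, (∀ e, 0 ≤ c e) →
    ∃ F, IsOptimalSteinerForest G s₁ t₁ s₂ t₂ c F ∧ Enforceable G s₁ t₁ s₂ t₂ c F

/-- `(G,(s₁,t₁),(s₂,t₂))` is strongly efficient: for every nonnegative cost
function every optimal Steiner forest is enforceable. -/
def StronglyEfficient (G : SimpleGraph V) (s₁ t₁ s₂ t₂ : V) : Prop :=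
  ∀ c : Sym2 V → ℝ, (∀ e, 0 ≤ c e) →
    ∀ F, IsOptimalSteinerForest G s₁ t₁ s₂ t₂ c F → Enforceable G s₁ t₁ s₂ t₂ c F

/-- A preliminary bad configuration (PBC) for the terminal pairs `(u,v)` and
`(w,x)`: the path `P_u = Lu ++ M ++ Ru` of one player and the path
`P_ℓ = Ll ++ M ++ Rl` of the other player meet exactly in the nonempty,
consistently oriented common subpath `M`; `q₁` closes a unique cycle with `P_u`
(intersecting it in the segment `S1`, which contains edges of `R_u` and of `M`),
`q₂` and `q₃` close unique cycles with `P_ℓ` (intersecting it in the segments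
`S2` resp. `S3`, containing edges of `L_ℓ` resp. `R_ℓ` and of `M`, and missing
part of `M`); moreover `C := C₂ ∩ C₃ ∩ M` is nonempty and contained in `C₁`, and
`(M ∩ C₁ ∩ C₂) \ C` and `(M ∩ C₁ ∩ C₃) \ C` each contain an edge. -/
structure PBC (G : SimpleGraph V) (u v w x : V) where
  a : V
  b : V
  Lu : G.Walk u a
  M : G.Walk a b
  Ru : G.Walk b v
  Ll : G.Walk w a
  Rl : G.Walk b x
  hM_ne : M.edges ≠ []
  hPu : ((Lu.append M).append Ru).IsPath
  hPl : ((Ll.append M).append Rl).IsPath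
  hforest : (SimpleGraph.fromEdgeSet
      {e | e ∈ ((Lu.append M).append Ru).edges ∨ e ∈ ((Ll.append M).append Rl).edges}).IsAcyclic
  hmeet : ∀ e, e ∈ ((Lu.append M).append Ru).edges →
      e ∈ ((Ll.append M).append Rl).edges → e ∈ M.edges
  hRu_ne : Ru.edges ≠ []
  hLl_ne : Ll.edges ≠ []
  hRl_ne : Rl.edges ≠ []
  a1 : V
  b1 : V
  q1 : G.Walk a1 b1
  S1 : G.Walk a1 b1
  hq1path : q1.IsPath
  hq1_ne : q1.edges ≠ []
  hS1 : S1.darts <:+: ((Lu.append M).append Ru).darts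
  hq1closes : ∀ y ∈ q1.support, y ∈ ((Lu.append M).append Ru).support → y = a1 ∨ y = b1
  hC1Ru : ∃ e ∈ S1.edges, e ∈ Ru.edges
  hC1M : ∃ e ∈ S1.edges, e ∈ M.edges
  a2 : V
  b2 : V
  q2 : G.Walk a2 b2
  S2 : G.Walk a2 b2
  hq2path : q2.IsPath
  hq2_ne : q2.edges ≠ []
  hS2 : S2.darts <:+: ((Ll.append M).append Rl).darts
  hq2closes : ∀ y ∈ q2.support, y ∈ ((Ll.append M).append Rl).support → y = a2 ∨ y = b2
  hC2Ll : ∃ e ∈ S2.edges, e ∈ Ll.edges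
  hC2M : ∃ e ∈ S2.edges, e ∈ M.edges
  hMC2 : ∃ e ∈ M.edges, e ∉ S2.edges
  a3 : V
  b3 : V
  q3 : G.Walk a3 b3
  S3 : G.Walk a3 b3
  hq3path : q3.IsPath
  hq3_ne : q3.edges ≠ []
  hS3 : S3.darts <:+: ((Ll.append M).append Rl).darts
  hq3closes : ∀ y ∈ q3.support, y ∈ ((Ll.append M).append Rl).support → y = a3 ∨ y = b3
  hC3Rl : ∃ e ∈ S3.edges, e ∈ Rl.edges
  hC3M : ∃ e ∈ S3.edges, e ∈ M.edges
  hMC3 : ∃ e ∈ M.edges, e ∉ S3.edges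
  hC_ne : ∃ e ∈ M.edges, e ∈ S2.edges ∧ e ∈ S3.edges
  hC_sub : ∀ e ∈ M.edges, e ∈ S2.edges → e ∈ S3.edges → e ∈ S1.edges
  hC1C2 : ∃ e ∈ M.edges, e ∈ S1.edges ∧ e ∈ S2.edges ∧ e ∉ S3.edges
  hC1C3 : ∃ e ∈ M.edges, e ∈ S1.edges ∧ e ∈ S3.edges ∧ e ∉ S2.edges

namespace PBC

variable {G : SimpleGraph V} {u v w x : V}

/-- The path of the "upper" player (terminals `u`, `v`). -/
def Pu (B : PBC G u v w x) : G.Walk u v := (B.Lu.append B.M).append B.Ru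

/-- The path of the "lower" player (terminals `w`, `x`). -/
def Pl (B : PBC G u v w x) : G.Walk w x := (B.Ll.append B.M).append B.Rl

/-- `q₁` is small: the cycle `C₁` contains no edge of `L_u`. -/
def Small (B : PBC G u v w x) : Prop := ∀ e ∈ B.S1.edges, e ∉ B.Lu.edges

/-- `q₁` is big: the cycle `C₁` contains an edge of `L_u`. -/
def Big (B : PBC G u v w x) : Prop := ∃ e ∈ B.S1.edges, e ∈ B.Lu.edges

/-- Node-disjointness of two walks. -/
def NodeDisj {y z y' z' : V} (p : G.Walk y z) (q : G.Walk y' z') : Prop :=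
  ∀ s ∈ p.support, s ∉ q.support

/-- `q` is internally node-disjoint from `P_u ∪ P_ℓ`. -/
def InternDisj (B : PBC G u v w x) {y z : V} (q : G.Walk y z) : Prop :=
  ∀ s ∈ q.support, s ≠ y → s ≠ z → s ∉ B.Pu.support ∧ s ∉ B.Pl.support

/-- The two walks intersect exactly in a common (possibly reversed) subpath. -/
def CommonMid {y z y' z' : V} (p : G.Walk y z) (q : G.Walk y' z') : Prop :=
  ∃ (c d : V) (m : G.Walk c d), m.IsPath ∧
    m.darts <:+: p.darts ∧ (m.darts <:+: q.darts ∨ m.reverse.darts <:+: q.darts) ∧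
    ∀ s, s ∈ p.support → s ∈ q.support → s ∈ m.support

/-- `q` contains no node of `L_u` or `R_u`. -/
def AvoidsUpperOuter (B : PBC G u v w x) {y z : V} (q : G.Walk y z) : Prop :=
  ∀ s ∈ q.support, s ∉ B.Lu.support ∧ s ∉ B.Ru.support

/-- In BC3/BC4, `q₁` avoids `R_ℓ` and the start node of `q₂`, and its initial
segment `α₁` (up to the last node contained in `L_ℓ`) runs inside the cycle
`C₂` along `L_ℓ`. -/
def LlTraverse (B : PBC G u v w x) : Prop :=
  (∀ s ∈ B.q1.support, s ∉ B.Rl.support) ∧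
  B.a2 ∉ B.q1.support ∧
  ∃ (y : V) (α : G.Walk B.a1 y) (β : G.Walk y B.b1),
    B.q1 = α.append β ∧ y ∈ B.Ll.support ∧
    (∀ e ∈ α.edges, e ∈ B.S2.edges) ∧
    (∀ s ∈ β.support, s ∈ B.Ll.support → s = y)

/-- Types BC1a (`q₁` small) and BC1b (`q₁` big): `q₁,q₂,q₃` pairwise
node-disjoint and internally node-disjoint from `P_u ∪ P_ℓ`. -/
def BC1 (B : PBC G u v w x) : Prop :=
  NodeDisj B.q1 B.q2 ∧ NodeDisj B.q1 B.q3 ∧ NodeDisj B.q2 B.q3 ∧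
  B.InternDisj B.q1 ∧ B.InternDisj B.q2 ∧ B.InternDisj B.q3

/-- Types BC2a–d: `q₃` node-disjoint with `q₁` and `q₂`; `q₁` and `q₂` overlap
exactly in a common subpath (`α₂ = β₂`); everything internally node-disjoint
from `P_u ∪ P_ℓ` (the subtypes corresponding to `q₁` small/big and the two
orientations of the common subpath are subsumed). -/
def BC2 (B : PBC G u v w x) : Prop :=
  NodeDisj B.q3 B.q1 ∧ NodeDisj B.q3 B.q2 ∧
  ¬ NodeDisj B.q1 B.q2 ∧ CommonMid B.q1 B.q2 ∧
  B.InternDisj B.q1 ∧ B.InternDisj B.q2 ∧ B.InternDisj B.q3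

/-- Type BC3. -/
def BC3 (B : PBC G u v w x) : Prop :=
  B.Small ∧ (∀ e ∈ B.M.edges, e ∈ B.S1.edges) ∧
  NodeDisj B.q1 B.q2 ∧ NodeDisj B.q1 B.q3 ∧ NodeDisj B.q2 B.q3 ∧
  B.AvoidsUpperOuter B.q2 ∧ B.AvoidsUpperOuter B.q3 ∧
  B.LlTraverse

/-- Types BC4a/b. -/
def BC4 (B : PBC G u v w x) : Prop :=
  B.Small ∧ (∀ e ∈ B.M.edges, e ∈ B.S1.edges) ∧
  NodeDisj B.q3 B.q1 ∧ NodeDisj B.q3 B.q2 ∧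
  ¬ NodeDisj B.q1 B.q2 ∧ CommonMid B.q1 B.q2 ∧
  B.AvoidsUpperOuter B.q2 ∧ B.AvoidsUpperOuter B.q3 ∧
  B.LlTraverse

/-- A PBC is a bad configuration if it is of one of the nine types
BC1a, BC1b, BC2a, BC2b, BC2c, BC2d, BC3, BC4a, BC4b. -/
def IsBC (B : PBC G u v w x) : Prop := B.BC1 ∨ B.BC2 ∨ B.BC3 ∨ B.BC4

end PBC

/-- `(G,(s₁,t₁),(s₂,t₂))` contains a subgraph which is a bad configuration,
for some assignment of the terminal pairs to `(u,v)` and `(w,x)`. -/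
def ContainsBC (G : SimpleGraph V) (s₁ t₁ s₂ t₂ : V) : Prop :=
  (∃ B : PBC G s₁ t₁ s₂ t₂, B.IsBC) ∨ (∃ B : PBC G s₁ t₁ t₂ s₂, B.IsBC) ∨
  (∃ B : PBC G t₁ s₁ s₂ t₂, B.IsBC) ∨ (∃ B : PBC G t₁ s₁ t₂ s₂, B.IsBC) ∨
  (∃ B : PBC G s₂ t₂ s₁ t₁, B.IsBC) ∨ (∃ B : PBC G s₂ t₂ t₁ s₁, B.IsBC) ∨
  (∃ B : PBC G t₂ s₂ s₁ t₁, B.IsBC) ∨ (∃ B : PBC G t₂ s₂ t₁ s₁, B.IsBC)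

namespace PBC

variable {G : SimpleGraph V} {u v w x : V}

/-- A node of `L_ℓ` is substituted by `q₂` if it is an internal node of the
intersection `S2` of the cycle `C₂` with `P_ℓ`. -/
def SubstitutedByQ2 (B : PBC G u v w x) (s : V) : Prop :=
  s ∈ B.S2.support ∧ s ≠ B.a2 ∧ s ≠ B.b2

/-- A node of `R_ℓ` is substituted by `q₃` if it is an internal node of the
intersection `S3` of the cycle `C₃` with `P_ℓ`. -/
def SubstitutedByQ3 (B : PBC G u v w x) (s : V) : Prop :=
  s ∈ B.S3.support ∧ s ≠ B.a3 ∧ s ≠ B.b3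

/-- NBC1: `q₁` small and `q₁`, `q₃` not node-disjoint. -/
def NBC1 (B : PBC G u v w x) : Prop :=
  B.Small ∧ ∃ s ∈ B.q1.support, s ∈ B.q3.support

/-- NBC2: `q₂`, `q₃` not node-disjoint. -/
def NBC2 (B : PBC G u v w x) : Prop :=
  ∃ s ∈ B.q2.support, s ∈ B.q3.support

/-- NBC3: `q₂` contains an internal node of `L_u` or of `R_u`. -/
def NBC3 (B : PBC G u v w x) : Prop :=
  ∃ s ∈ B.q2.support,
    (s ∈ B.Lu.support ∧ s ≠ u ∧ s ≠ B.a) ∨ (s ∈ B.Ru.support ∧ s ≠ B.b ∧ s ≠ v)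

/-- NBC4: `q₃` contains an internal node of `L_u` or of `R_u`. -/
def NBC4 (B : PBC G u v w x) : Prop :=
  ∃ s ∈ B.q3.support,
    (s ∈ B.Lu.support ∧ s ≠ u ∧ s ≠ B.a) ∨ (s ∈ B.Ru.support ∧ s ≠ B.b ∧ s ≠ v)

/-- NBC5: `q₁` contains a node of `L_ℓ` and a node of `R_ℓ`. -/
def NBC5 (B : PBC G u v w x) : Prop :=
  (∃ s ∈ B.q1.support, s ∈ B.Ll.support ∧ s ≠ B.a) ∧
  (∃ s ∈ B.q1.support, s ∈ B.Rl.support ∧ s ≠ B.b)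

/-- NBC6: `q₁` small and `q₁` contains a node of `R_ℓ`. -/
def NBC6 (B : PBC G u v w x) : Prop :=
  B.Small ∧ ∃ s ∈ B.q1.support, s ∈ B.Rl.support ∧ s ≠ B.b

/-- NBC7: `q₁` big and `q₁` contains a node of `R_ℓ` not substituted by `q₃`. -/
def NBC7 (B : PBC G u v w x) : Prop :=
  B.Big ∧ ∃ s ∈ B.q1.support, s ∈ B.Rl.support ∧ s ≠ B.b ∧ ¬ B.SubstitutedByQ3 s

/-- NBC8: `q₁` big and either `q₁` is not node-disjoint with `q₂` and contains
a node of `R_ℓ` substituted by `q₃`, or `q₁` is not node-disjoint with `q₃` and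
contains a node of `L_ℓ` substituted by `q₂`. -/
def NBC8 (B : PBC G u v w x) : Prop :=
  B.Big ∧
  ((¬ NodeDisj B.q1 B.q2 ∧
      ∃ s ∈ B.q1.support, s ∈ B.Rl.support ∧ s ≠ B.b ∧ B.SubstitutedByQ3 s) ∨
   (¬ NodeDisj B.q1 B.q3 ∧
      ∃ s ∈ B.q1.support, s ∈ B.Ll.support ∧ s ≠ B.a ∧ B.SubstitutedByQ2 s))

/-- NBC9: `q₁` contains a node of `L_ℓ` not substituted by `q₂`. -/
def NBC9 (B : PBC G u v w x) : Prop :=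
  ∃ s ∈ B.q1.support, s ∈ B.Ll.support ∧ s ≠ B.a ∧ ¬ B.SubstitutedByQ2 s

/-- NBC10: `q₁` small and `q₁` (directed from left to right) contains a node of
`L_ℓ` substituted by `q₂` after a node of `q₂`. -/
def NBC10 (B : PBC G u v w x) : Prop :=
  B.Small ∧ ∃ z y : V, z ∈ B.q2.support ∧
    y ∈ B.Ll.support ∧ y ≠ B.a ∧ B.SubstitutedByQ2 y ∧ [z, y].Sublist B.q1.support

/-- NBC11: `q₁` big and either `q₁` (directed) contains a node of `L_ℓ`
substituted by `q₂` after a node of `q₂`, or `q₁` (directed) contains a node of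
`q₃` after a node of `R_ℓ` substituted by `q₃`. -/
def NBC11 (B : PBC G u v w x) : Prop :=
  B.Big ∧
  ((∃ z y : V, z ∈ B.q2.support ∧
      y ∈ B.Ll.support ∧ y ≠ B.a ∧ B.SubstitutedByQ2 y ∧ [z, y].Sublist B.q1.support) ∨
   (∃ z y : V, z ∈ B.Rl.support ∧ z ≠ B.b ∧ B.SubstitutedByQ3 z ∧
      y ∈ B.q3.support ∧ [z, y].Sublist B.q1.support))

/-- NBC12: `q₁` big, not node-disjoint with `q₂` and not node-disjoint
with `q₃`. -/
def NBC12 (B : PBC G u v w x) : Prop :=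
  B.Big ∧ ¬ NodeDisj B.q1 B.q2 ∧ ¬ NodeDisj B.q1 B.q3

/-- A PBC is a No Bad Configuration if it is of one of the twelve types
NBC1–NBC12. -/
def IsNBC (B : PBC G u v w x) : Prop :=
  B.NBC1 ∨ B.NBC2 ∨ B.NBC3 ∨ B.NBC4 ∨ B.NBC5 ∨ B.NBC6 ∨
  B.NBC7 ∨ B.NBC8 ∨ B.NBC9 ∨ B.NBC10 ∨ B.NBC11 ∨ B.NBC12

end PBC

/-- Total cost of (the edges of) a walk. -/
def walkCost {G : SimpleGraph V} (c : Sym2 V → ℝ) {y z : V} (q : G.Walk y z) : ℝ :=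
  ∑ e ∈ q.edges.toFinset, c e

section LP

variable (G : SimpleGraph V) {s₁ t₁ s₂ t₂ : V} (c : Sym2 V → ℝ)

/-- Feasibility for LP(F), where `F` consists of the edges of `P₁` and `P₂`:
nonnegative cost shares, supported on the respective path, capacity constraints
on every edge of `F`, and the Nash constraints for all alternative paths. -/
def Feasible2 (P₁ : G.Walk s₁ t₁) (P₂ : G.Walk s₂ t₂) (ξ₁ ξ₂ : Sym2 V → ℝ) : Prop :=
  (∀ e, 0 ≤ ξ₁ e) ∧ (∀ e, 0 ≤ ξ₂ e) ∧
  (∀ e, e ∉ P₁.edges → ξ₁ e = 0) ∧ (∀ e, e ∉ P₂.edges → ξ₂ e = 0) ∧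
  (∀ e ∈ P₁.edges.toFinset ∪ P₂.edges.toFinset, ξ₁ e + ξ₂ e ≤ c e) ∧
  (∀ q : G.Walk s₁ t₁, q.IsPath →
    ∑ e ∈ P₁.edges.toFinset \ q.edges.toFinset, ξ₁ e ≤
      ∑ e ∈ q.edges.toFinset \ P₁.edges.toFinset, c e) ∧
  (∀ q : G.Walk s₂ t₂, q.IsPath →
    ∑ e ∈ P₂.edges.toFinset \ q.edges.toFinset, ξ₂ e ≤
      ∑ e ∈ q.edges.toFinset \ P₂.edges.toFinset, c e)

/-- Objective function of LP(F). -/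
def Obj2 (P₁ : G.Walk s₁ t₁) (P₂ : G.Walk s₂ t₂) (ξ₁ ξ₂ : Sym2 V → ℝ) : ℝ :=
  ∑ e ∈ P₁.edges.toFinset, ξ₁ e + ∑ e ∈ P₂.edges.toFinset, ξ₂ e

/-- Optimal solutions of LP(F). -/
def Optimal2 (P₁ : G.Walk s₁ t₁) (P₂ : G.Walk s₂ t₂) (ξ₁ ξ₂ : Sym2 V → ℝ) : Prop :=
  Feasible2 G c P₁ P₂ ξ₁ ξ₂ ∧
  ∀ η₁ η₂, Feasible2 G c P₁ P₂ η₁ η₂ → Obj2 G P₁ P₂ η₁ η₂ ≤ Obj2 G P₁ P₂ ξ₁ ξ₂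

/-- Edge `e` is completely paid. -/
def Paid (ξ₁ ξ₂ : Sym2 V → ℝ) (e : Sym2 V) : Prop := ξ₁ e + ξ₂ e = c e

/-- Increase the cost share on `e` by `ε` and decrease it on `f` by `ε`. -/
def pushFun (ξ : Sym2 V → ℝ) (e f : Sym2 V) (ε : ℝ) : Sym2 V → ℝ :=
  fun g => if g = e then ξ g + ε else if g = f then ξ g - ε else ξ g

/-- The ordering of the edges of `F`: first the `ℓ₁` edges of `P₁` from `s₁` to
the middle part, then the `ℓ₂` edges of `P₂` from `s₂` to the middle part, then
the `m` middle edges from left to right, then the `r₁` edges towards `t₁`, then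
the `r₂` edges towards `t₂`. -/
def ordList {a b : V} (L₁ : G.Walk s₁ a) (M : G.Walk a b) (R₁ : G.Walk b t₁)
    (L₂ : G.Walk s₂ a) (R₂ : G.Walk b t₂) : List (Sym2 V) :=
  L₁.edges ++ L₂.edges ++ M.edges ++ R₁.edges ++ R₂.edges

/-- `k` is the (0-based) position of the first edge of `F` (w.r.t. the
ordering `ord`) which is not completely paid. -/
def FirstUnpaid (ord : List (Sym2 V)) (ξ₁ ξ₂ : Sym2 V → ℝ) (k : ℕ) : Prop :=
  k < ord.length ∧ (∀ e, ord[k]? = some e → ¬ Paid c ξ₁ ξ₂ e) ∧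
  ∀ j, j < k → ∀ e, ord[j]? = some e → Paid c ξ₁ ξ₂ e

/-- The solution `(ξ₁, ξ₂)` is pushed to the left: no push operation (moving
an `ε > 0` of a player's cost share from an edge of higher order to an edge of
lower order) yields a feasible solution of LP(F). -/
def PushedLeft (P₁ : G.Walk s₁ t₁) (P₂ : G.Walk s₂ t₂) (ord : List (Sym2 V))
    (ξ₁ ξ₂ : Sym2 V → ℝ) : Prop :=
  (∀ e ∈ P₁.edges, ∀ f ∈ P₁.edges, ord.idxOf e < ord.idxOf f →
    ∀ ε : ℝ, 0 < ε → ¬ Feasible2 G c P₁ P₂ (pushFun ξ₁ e f ε) ξ₂) ∧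
  (∀ e ∈ P₂.edges, ∀ f ∈ P₂.edges, ord.idxOf e < ord.idxOf f →
    ∀ ε : ℝ, 0 < ε → ¬ Feasible2 G c P₁ P₂ ξ₁ (pushFun ξ₂ e f ε))

/-- Feasibility of the operation CHANGE(j,i) for the middle edges `ej`, `ei`:
increasing `ξ₂` on `ei` and `ξ₁` on `ej` while simultaneously decreasing `ξ₂`
on `ej` and `ξ₁` on `ei` by some common positive amount stays feasible. -/
def ChangeFeasible (P₁ : G.Walk s₁ t₁) (P₂ : G.Walk s₂ t₂) (ξ₁ ξ₂ : Sym2 V → ℝ)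
    (ej ei : Sym2 V) : Prop :=
  ∃ ε : ℝ, 0 < ε ∧ Feasible2 G c P₁ P₂ (pushFun ξ₁ ej ei ε) (pushFun ξ₂ ei ej ε)

/-- Property (2M): the sum of cost shares of Player 2 is maximal among all
optimal solutions of LP(F) whose first not-completely-paid edge is the edge of
order `k`. -/
def Max2 (P₁ : G.Walk s₁ t₁) (P₂ : G.Walk s₂ t₂) (ord : List (Sym2 V))
    (ξ₂ : Sym2 V → ℝ) (k : ℕ) : Prop :=
  ∀ η₁ η₂, Optimal2 G c P₁ P₂ η₁ η₂ → FirstUnpaid c ord η₁ η₂ k →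
    ∑ e ∈ P₂.edges.toFinset, η₂ e ≤ ∑ e ∈ P₂.edges.toFinset, ξ₂ e

/-- Property (NC): CHANGE(j,i) is not feasible for any pair `j < i` of
middle-part positions (the middle part occupies positions `ℓ, …, ℓ+m-1`). -/
def NoChange (P₁ : G.Walk s₁ t₁) (P₂ : G.Walk s₂ t₂) (ord : List (Sym2 V))
    (ξ₁ ξ₂ : Sym2 V → ℝ) (ℓ m : ℕ) : Prop :=
  ∀ j i : ℕ, ℓ ≤ j → j < i → i < ℓ + m →
    ∀ ej ei : Sym2 V, ord[j]? = some ej → ord[i]? = some ei →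
      ¬ ChangeFeasible G c P₁ P₂ ξ₁ ξ₂ ej ei

/-- The solution is maximized for Player 2: properties (2M) and (NC). -/
def Maximized2 (P₁ : G.Walk s₁ t₁) (P₂ : G.Walk s₂ t₂) (ord : List (Sym2 V))
    (ξ₁ ξ₂ : Sym2 V → ℝ) (k ℓ m : ℕ) : Prop :=
  Max2 G c P₁ P₂ ord ξ₂ k ∧ NoChange G c P₁ P₂ ord ξ₁ ξ₂ ℓ m

end LP

end NDG

/-!
Since `q₁` and `q₃` share a node, deleting the substituted segments `S₁ ⊆ P_u`, `S₃ ⊆ P_ℓ` from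
`F` and adding `q₁ ∪ q₃` still connects both terminal pairs: `S₁` runs from `M` into `R_u` and
`S₃` from `M` into `R_ℓ`, so `L_u`, `L_ℓ`, the part of `M` before the earlier of the two segments
and the two tails behind them survive. Optimality of `F` then gives
`c(S₁ ∪ S₃) ≤ c(q₁) + c(q₃) = ξ_u(S₁) + ξ_ℓ(S₃)`, while the capacity constraints give the reverse
inequality edge by edge. So every edge of `S₁ ∪ S₃` is tight, and on `S₁ \ S₃` the share of the
upper player alone equals the cost.
-/

namespace List

variable {α : Type*} {L M R X Y Z : List α}

theorem Nodup.disjoint_left_middle (h : (L ++ M ++ R).Nodup) : L.Disjoint M :=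
  disjoint_of_nodup_append h.of_append_left

theorem Nodup.disjoint_middle_right (h : (L ++ M ++ R).Nodup) : M.Disjoint R :=
  fun _ hM hR => disjoint_of_nodup_append h (mem_append_right L hM) hR

theorem exists_append_eq_of_append_eq_append_of_disjoint
    (h : X ++ Y ++ Z = L ++ (M ++ R)) (hY : Y ≠ []) (hYL : ∀ e ∈ Y, e ∉ L) :
    ∃ B, X = L ++ B ∧ M ++ R = B ++ Y ++ Z := by
  rw [append_assoc, append_eq_append_iff] at h
  rcases h with ⟨_ | ⟨e, A⟩, rfl, hYZ⟩ | ⟨B, rfl, hB⟩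
  · exact ⟨[], by simp, by simpa using hYZ.symm⟩
  · obtain ⟨y, Y, rfl⟩ := exists_cons_of_ne_nil hY
    obtain ⟨rfl, -⟩ := cons.inj hYZ
    exact absurd (by simp) (hYL y mem_cons_self)
  · exact ⟨B, rfl, by simpa using hB⟩

theorem exists_prefix_and_subset_of_append_eq_append (h : L ++ M ++ R = X ++ Y ++ Z)
    (hnd : (L ++ M ++ R).Nodup) (hYL : ∀ e ∈ Y, e ∉ L) (hYM : ∃ e ∈ Y, e ∈ M)
    (hYR : ∃ e ∈ Y, e ∈ R) : (∃ B, X = L ++ B ∧ B <+: M) ∧ Z ⊆ R := by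
  obtain ⟨m, hmY, hmM⟩ := hYM
  obtain ⟨r, hrY, hrR⟩ := hYR
  have hLMR := disjoint_of_nodup_append hnd
  refine ⟨?_, ?_⟩
  · obtain ⟨B, rfl, hB⟩ := exists_append_eq_of_append_eq_append_of_disjoint
      (by simpa using h.symm) (ne_nil_of_mem hmY) hYL
    rcases append_eq_append_iff.mp (hB.trans (append_assoc ..)) with ⟨A, rfl, hR⟩ | ⟨C, rfl, -⟩
    · exact (hLMR (a := m) (by simp [hmM]) (by simp [hR, hmY])).elim
    · exact ⟨B, rfl, prefix_append B C⟩
  · rcases append_eq_append_iff.mp h with ⟨A, -, rfl⟩ | ⟨C, hLM, -⟩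
    · exact subset_append_right A Z
    · exact (hLMR (a := r) (by rw [hLM]; simp [hrY]) hrR).elim

theorem subset_or_subset_of_append_eq_append_cons {P Q : List α} {b : α}
    (h : X ++ Y ++ Z = P ++ b :: Q) (hb : b ∉ Y) : Y ⊆ P ∨ Y ⊆ Q := by
  rcases append_eq_append_iff.mp ((append_assoc ..).symm.trans h) with ⟨A, rfl, hA⟩ | ⟨C, -, hC⟩
  · rcases append_eq_append_iff.mp hA with ⟨D, rfl, -⟩ | ⟨_ | ⟨d, D⟩, rfl, hD⟩
    · exact .inl (by simp +contextual)
    · exact .inl (by simp)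
    · obtain ⟨rfl, -⟩ := cons.inj hD
      exact absurd (by simp) hb
  · rcases C with _ | ⟨d, C⟩
    · rcases Y with _ | ⟨y, Y⟩
      · simp
      · obtain ⟨rfl, -⟩ := cons.inj hC
        exact absurd mem_cons_self hb
    · obtain ⟨-, rfl⟩ := cons.inj hC
      exact .inr (by simp +contextual)

theorem Nodup.notMem_left_of_isInfix (hnd : (L ++ M ++ R).Nodup) (hY : Y <:+: L ++ M ++ R)
    (hYR : ∃ e ∈ Y, e ∈ R) (hMY : ∃ e ∈ M, e ∉ Y) : ∀ e ∈ Y, e ∉ L := by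
  intro e heY heL
  obtain ⟨X, Z, h⟩ := hY
  obtain ⟨r, hrY, hrR⟩ := hYR
  obtain ⟨m, hmM, hmY⟩ := hMY
  obtain ⟨M₁, M₂, rfl⟩ := append_of_mem hmM
  have hLM := hnd.disjoint_left_middle
  have hMR := hnd.disjoint_middle_right
  have hLR : L.Disjoint R := fun a ha hb => disjoint_of_nodup_append hnd (by simp [ha]) hb
  rcases subset_or_subset_of_append_eq_append_cons (P := L ++ M₁) (Q := M₂ ++ R)
    (by simpa using h) hmY with hY | hY
  · rcases mem_append.mp (hY hrY) with h' | h'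
    · exact hLR h' hrR
    · exact hMR (by simp [h']) hrR
  · rcases mem_append.mp (hY heY) with h' | h'
    · exact hLM heL (by simp [h'])
    · exact hLR heL h'

end List

namespace SimpleGraph

variable {V : Type*} {G : SimpleGraph V}

namespace Walk

theorem exists_append_eq_of_darts_isInfix {y z a b s t : V} {L : G.Walk y a} {M : G.Walk a b}
    {R : G.Walk b z} {S : G.Walk s t} (hp : ((L.append M).append R).IsPath)
    (hS : S.darts <:+: ((L.append M).append R).darts) (hSL : ∀ e ∈ S.edges, e ∉ L.edges)
    (hSM : ∃ e ∈ S.edges, e ∈ M.edges) (hSR : ∃ e ∈ S.edges, e ∈ R.edges) :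
    ∃ (r₁ : G.Walk y s) (r₂ : G.Walk t z) (B : List (Sym2 V)),
      (L.append M).append R = (r₁.append S).append r₂ ∧
      r₁.edges = L.edges ++ B ∧ B <+: M.edges ∧ r₂.edges ⊆ R.edges := by
  have hS_nil : ¬ S.Nil := fun h => by
    obtain ⟨e, he, -⟩ := hSM
    simp [edges_eq_nil.mpr h] at he
  obtain ⟨r₁, r₂, hp'⟩ := (isSubwalk_iff_darts_isInfix hS_nil).mpr hS
  have hE := congrArg edges hp'
  simp only [edges_append] at hE
  have hnd := hp.isTrail.edges_nodup
  simp only [edges_append] at hnd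
  obtain ⟨⟨B, hB, hBM⟩, hR⟩ :=
    List.exists_prefix_and_subset_of_append_eq_append hE hnd hSL hSM hSR
  exact ⟨r₁, r₂, B, hp', hB, hBM, hR⟩

theorem reachable_fromEdgeSet {s : Set (Sym2 V)} {y z : V} (p : G.Walk y z)
    (hp : ∀ e ∈ p.edges, e ∈ s) : (fromEdgeSet s).Reachable y z :=
  ⟨p.transfer _ fun e he => by
    rw [edgeSet_fromEdgeSet]
    exact ⟨hp e he, G.not_isDiag_of_mem_edgeSet (p.edges_subset_edgeSet he)⟩⟩

theorem reachable_fromEdgeSet_of_mem_support [DecidableEq V] {s : Set (Sym2 V)} {y z : V}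
    (p : G.Walk y z) (hp : ∀ e ∈ p.edges, e ∈ s) {y' : V} (hy' : y' ∈ p.support) :
    (fromEdgeSet s).Reachable y y' :=
  (p.takeUntil y' hy').reachable_fromEdgeSet fun e he =>
    hp e (p.edges_takeUntil_subset_edges hy' he)

end Walk

theorem Reachable.exists_isPath_of_le {T : SimpleGraph V} (hTG : T ≤ G) {s t : V}
    (h : T.Reachable s t) : ∃ p : G.Walk s t, p.IsPath ∧ ∀ e ∈ p.edges, e ∈ T.edgeSet := by
  classical
  obtain ⟨q⟩ := h
  refine ⟨q.toPath.1.mapLe hTG, q.toPath.2.mapLe hTG, fun e he => ?_⟩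
  rw [Walk.edges_mapLe_eq_edges] at he
  exact q.toPath.1.edges_subset_edgeSet he

end SimpleGraph

namespace NDG

variable {V : Type*}

open SimpleGraph

theorem exists_isSteinerForest_subset {G : SimpleGraph V} {s₁ t₁ s₂ t₂ : V} {F : Finset (Sym2 V)}
    (hF : ↑F ⊆ G.edgeSet) (h₁ : (fromEdgeSet (F : Set (Sym2 V))).Reachable s₁ t₁)
    (h₂ : (fromEdgeSet (F : Set (Sym2 V))).Reachable s₂ t₂) :
    ∃ F' ⊆ F, IsSteinerForest G s₁ t₁ s₂ t₂ F' := by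
  classical
  obtain ⟨T, hTF, hT, hTr⟩ := (fromEdgeSet (F : Set (Sym2 V))).exists_isAcyclic_reachable_eq_le
  have hTG : T ≤ G := hTF.trans ((fromEdgeSet_le (G := G)).mpr fun e he => hF he.1)
  have hTF' : T.edgeSet ⊆ F := fun e he => by
    have := edgeSet_mono hTF he
    rw [edgeSet_fromEdgeSet] at this
    exact this.1
  have hpath {s t : V} (h : (fromEdgeSet (F : Set (Sym2 V))).Reachable s t) :
      ∃ p : G.Walk s t, p.IsPath ∧ ∀ e ∈ p.edges, e ∈ F.filter (· ∈ T.edgeSet) := by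
    obtain ⟨p, hp, hpT⟩ := (hTr ▸ h).exists_isPath_of_le hTG
    exact ⟨p, hp, fun e he => Finset.mem_filter.mpr ⟨hTF' (hpT e he), hpT e he⟩⟩
  have hcoe : ((F.filter (· ∈ T.edgeSet) : Finset (Sym2 V)) : Set (Sym2 V)) = T.edgeSet := by
    ext e
    simpa using fun he => hTF' he
  refine ⟨F.filter (· ∈ T.edgeSet), Finset.filter_subset _ _, ?_, ?_, ?_, ?_⟩
  · rw [hcoe]
    exact edgeSet_mono hTG
  · rwa [hcoe, fromEdgeSet_edgeSet]
  · exact hpath h₁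
  · exact hpath h₂

namespace PBC

variable {G : SimpleGraph V} {u v w x : V} (B : PBC G u v w x)

theorem Pu_edges : B.Pu.edges = B.Lu.edges ++ B.M.edges ++ B.Ru.edges := by
  simp [Pu, Walk.edges_append]

theorem Pl_edges : B.Pl.edges = B.Ll.edges ++ B.M.edges ++ B.Rl.edges := by
  simp [Pl, Walk.edges_append]

theorem Pu_edges_nodup : (B.Lu.edges ++ B.M.edges ++ B.Ru.edges).Nodup :=
  B.Pu_edges ▸ B.hPu.isTrail.edges_nodup

theorem Pl_edges_nodup : (B.Ll.edges ++ B.M.edges ++ B.Rl.edges).Nodup :=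
  B.Pl_edges ▸ B.hPl.isTrail.edges_nodup

variable {B}

theorem mem_Pu_of_mem_S1 {e : Sym2 V} (he : e ∈ B.S1.edges) : e ∈ B.Pu.edges :=
  (B.hS1.map Dart.edge).subset he

theorem mem_Pl_of_mem_S3 {e : Sym2 V} (he : e ∈ B.S3.edges) : e ∈ B.Pl.edges :=
  (B.hS3.map Dart.edge).subset he

theorem notMem_Pl_of_mem_Lu {e : Sym2 V} (he : e ∈ B.Lu.edges) : e ∉ B.Pl.edges := fun hPl =>
  B.Pu_edges_nodup.disjoint_left_middle he <|
    B.hmeet e (by simp [B.Pu_edges, he] : e ∈ B.Pu.edges) hPl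

theorem notMem_Pl_of_mem_Ru {e : Sym2 V} (he : e ∈ B.Ru.edges) : e ∉ B.Pl.edges := fun hPl =>
  B.Pu_edges_nodup.disjoint_middle_right
    (B.hmeet e (by simp [B.Pu_edges, he] : e ∈ B.Pu.edges) hPl) he

theorem notMem_Pu_of_mem_Ll {e : Sym2 V} (he : e ∈ B.Ll.edges) : e ∉ B.Pu.edges := fun hPu =>
  B.Pl_edges_nodup.disjoint_left_middle he <|
    B.hmeet e hPu (by simp [B.Pl_edges, he] : e ∈ B.Pl.edges)

theorem notMem_Pu_of_mem_Rl {e : Sym2 V} (he : e ∈ B.Rl.edges) : e ∉ B.Pu.edges := fun hPu =>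
  B.Pl_edges_nodup.disjoint_middle_right
    (B.hmeet e hPu (by simp [B.Pl_edges, he] : e ∈ B.Pl.edges)) he

theorem notMem_Ll_of_mem_S3 {e : Sym2 V} (he : e ∈ B.S3.edges) : e ∉ B.Ll.edges :=
  B.Pl_edges_nodup.notMem_left_of_isInfix (B.Pl_edges ▸ B.hS3.map Dart.edge) B.hC3Rl B.hMC3 e he

def keptEdges (B : PBC G u v w x) : Set (Sym2 V) :=
  {e | (e ∈ B.Pu.edges ∨ e ∈ B.Pl.edges) ∧ e ∉ B.S1.edges ∧ e ∉ B.S3.edges}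

theorem mem_keptEdges_of_mem_Lu (hsmall : B.Small) {e : Sym2 V} (he : e ∈ B.Lu.edges) :
    e ∈ B.keptEdges :=
  ⟨.inl (by simp [Pu_edges, he]), fun h => hsmall e h he,
    fun h => notMem_Pl_of_mem_Lu he (mem_Pl_of_mem_S3 h)⟩

theorem mem_keptEdges_of_mem_Ll {e : Sym2 V} (he : e ∈ B.Ll.edges) : e ∈ B.keptEdges :=
  ⟨.inr (by simp [Pl_edges, he]), fun h => notMem_Pu_of_mem_Ll he (mem_Pu_of_mem_S1 h),
    fun h => notMem_Ll_of_mem_S3 h he⟩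

theorem exists_walks_keptEdges (hsmall : B.Small) :
    ∃ (r₁ : G.Walk u B.a1) (r₂ : G.Walk B.b1 v) (l₁ : G.Walk w B.a3) (l₂ : G.Walk B.b3 x),
      (∀ e ∈ r₂.edges, e ∈ B.keptEdges) ∧ (∀ e ∈ l₂.edges, e ∈ B.keptEdges) ∧
      ((∀ e ∈ r₁.edges, e ∈ B.keptEdges) ∨ ∀ e ∈ l₁.edges, e ∈ B.keptEdges) := by
  obtain ⟨r₁, r₂, B₁, hPu_eq, hr₁, hB₁, hr₂⟩ :=
    Walk.exists_append_eq_of_darts_isInfix B.hPu B.hS1 hsmall B.hC1M B.hC1Ru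
  obtain ⟨l₁, l₂, B₃, hPl_eq, hl₁, hB₃, hl₂⟩ :=
    Walk.exists_append_eq_of_darts_isInfix B.hPl B.hS3 (fun _ => notMem_Ll_of_mem_S3) B.hC3M
      B.hC3Rl
  have hPu : B.Pu.edges = r₁.edges ++ B.S1.edges ++ r₂.edges := by
    rw [show B.Pu = _ from hPu_eq]
    simp [Walk.edges_append]
  have hPl : B.Pl.edges = l₁.edges ++ B.S3.edges ++ l₂.edges := by
    rw [show B.Pl = _ from hPl_eq]
    simp [Walk.edges_append]
  have hPu_nd := hPu ▸ B.hPu.isTrail.edges_nodup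
  have hPl_nd := hPl ▸ B.hPl.isTrail.edges_nodup
  have hr₁l₁ {e} (h₁ : e ∈ r₁.edges) (h₃ : e ∈ l₁.edges) : e ∈ B.keptEdges :=
    ⟨.inl (by simp [hPu, h₁]), hPu_nd.disjoint_left_middle h₁, hPl_nd.disjoint_left_middle h₃⟩
  refine ⟨r₁, r₂, l₁, l₂, fun e he => ⟨.inl (by simp [hPu, he]),
      fun h => hPu_nd.disjoint_middle_right h he,
      fun h => notMem_Pl_of_mem_Ru (hr₂ he) (mem_Pl_of_mem_S3 h)⟩,
    fun e he => ⟨.inr (by simp [hPl, he]),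
      fun h => notMem_Pu_of_mem_Rl (hl₂ he) (mem_Pu_of_mem_S1 h),
      fun h => hPl_nd.disjoint_middle_right h he⟩, ?_⟩
  -- both prefixes run along `M`, so the shorter one avoids both `S1` and `S3`
  rcases List.prefix_or_prefix_of_prefix hB₁ hB₃ with h | h
  · refine .inl fun e he => ?_
    rcases List.mem_append.mp (hr₁ ▸ he) with he' | he'
    · exact mem_keptEdges_of_mem_Lu hsmall he'
    · exact hr₁l₁ he (hl₁ ▸ List.mem_append_right _ (h.subset he'))
  · refine .inr fun e he => ?_
    rcases List.mem_append.mp (hl₁ ▸ he) with he' | he'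
    · exact mem_keptEdges_of_mem_Ll he'
    · exact hr₁l₁ (hr₁ ▸ List.mem_append_right _ (h.subset he')) he

theorem reachable_of_rerouting [DecidableEq V] (hsmall : B.Small) {s : V}
    (hs₁ : s ∈ B.q1.support) (hs₃ : s ∈ B.q3.support) {K : Set (Sym2 V)}
    (hK : B.keptEdges ⊆ K) (hq₁ : ∀ e ∈ B.q1.edges, e ∈ K) (hq₃ : ∀ e ∈ B.q3.edges, e ∈ K) :
    (fromEdgeSet K).Reachable u v ∧ (fromEdgeSet K).Reachable w x := by
  obtain ⟨r₁, r₂, l₁, l₂, hr₂, hl₂, hr₁ | hl₁⟩ := exists_walks_keptEdges hsmall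
  all_goals
    have hua := B.Lu.reachable_fromEdgeSet fun e he => hK (mem_keptEdges_of_mem_Lu hsmall he)
    have hwa := B.Ll.reachable_fromEdgeSet fun e he => hK (mem_keptEdges_of_mem_Ll he)
    have hb₁v := r₂.reachable_fromEdgeSet fun e he => hK (hr₂ e he)
    have hb₃x := l₂.reachable_fromEdgeSet fun e he => hK (hl₂ e he)
    have ha₁b₁ := B.q1.reachable_fromEdgeSet hq₁
    have ha₃b₃ := B.q3.reachable_fromEdgeSet hq₃
    have ha₁a₃ : (fromEdgeSet K).Reachable B.a1 B.a3 :=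
      (B.q1.reachable_fromEdgeSet_of_mem_support hq₁ hs₁).trans
        (B.q3.reachable_fromEdgeSet_of_mem_support hq₃ hs₃).symm
  · have hua₁ := r₁.reachable_fromEdgeSet fun e he => hK (hr₁ e he)
    exact ⟨hua₁.trans (ha₁b₁.trans hb₁v),
      hwa.trans (hua.symm.trans (hua₁.trans (ha₁a₃.trans (ha₃b₃.trans hb₃x))))⟩
  · have hwa₃ := l₁.reachable_fromEdgeSet fun e he => hK (hl₁ e he)
    exact ⟨hua.trans (hwa.symm.trans (hwa₃.trans (ha₁a₃.symm.trans (ha₁b₁.trans hb₁v)))),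
      hwa₃.trans (ha₃b₃.trans hb₃x)⟩

end PBC

variable [DecidableEq V]

theorem cost_union_le {c : Sym2 V → ℝ} (hc : ∀ e, 0 ≤ c e) (A B : Finset (Sym2 V)) :
    cost c (A ∪ B) ≤ cost c A + cost c B := by
  have := Finset.sum_union_inter (s₁ := A) (s₂ := B) (f := c)
  have : 0 ≤ cost c (A ∩ B) := Finset.sum_nonneg fun e _ => hc e
  unfold cost at *
  linarith

theorem IsOptimalSteinerForest.cost_le_of_reachable {G : SimpleGraph V} {s₁ t₁ s₂ t₂ : V}
    {c : Sym2 V → ℝ} (hc : ∀ e, 0 ≤ c e) {F S Q : Finset (Sym2 V)}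
    (hF : IsOptimalSteinerForest G s₁ t₁ s₂ t₂ c F) (hSF : S ⊆ F) (hQ : ↑Q ⊆ G.edgeSet)
    (h₁ : (fromEdgeSet (↑(F \ S ∪ Q) : Set (Sym2 V))).Reachable s₁ t₁)
    (h₂ : (fromEdgeSet (↑(F \ S ∪ Q) : Set (Sym2 V))).Reachable s₂ t₂) :
    cost c S ≤ cost c Q := by
  have hFG : ↑(F \ S ∪ Q) ⊆ G.edgeSet := by
    rw [Finset.coe_union]
    exact Set.union_subset ((Finset.coe_subset.mpr Finset.sdiff_subset).trans hF.1.1) hQ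
  obtain ⟨F', hF'sub, hF'⟩ := exists_isSteinerForest_subset hFG h₁ h₂
  have hopt : cost c F ≤ cost c (F \ S ∪ Q) :=
    (hF.2 F' hF').trans (Finset.sum_le_sum_of_subset_of_nonneg hF'sub fun e _ _ => hc e)
  have hsplit : cost c (F \ S) + cost c S = cost c F := Finset.sum_sdiff hSF
  linarith [cost_union_le hc (F \ S) Q]

theorem shares_eq_cost_of_cost_le {α : Type*} [DecidableEq α] {A B : Finset α}
    {c ξ₁ ξ₂ : α → ℝ} (h₁ : ∀ e, 0 ≤ ξ₁ e) (h₂ : ∀ e, 0 ≤ ξ₂ e)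
    (hcap : ∀ e ∈ A ∪ B, ξ₁ e + ξ₂ e ≤ c e)
    (hcost : ∑ e ∈ A ∪ B, c e ≤ ∑ e ∈ A, ξ₁ e + ∑ e ∈ B, ξ₂ e) :
    (∀ e ∈ A ∪ B, ξ₁ e + ξ₂ e = c e) ∧ ∀ e ∈ A, e ∉ B → ξ₁ e = c e := by
  set g : α → ℝ := fun e => (if e ∈ A then ξ₁ e else 0) + (if e ∈ B then ξ₂ e else 0)
  have hgc : ∀ e ∈ A ∪ B, g e ≤ c e := by
    intro e he
    have := hcap e he
    by_cases hA : e ∈ A <;> by_cases hB : e ∈ B <;> simp [g, hA, hB] at he ⊢ <;>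
      linarith [h₁ e, h₂ e]
  have hsum : ∑ e ∈ A ∪ B, g e = ∑ e ∈ A, ξ₁ e + ∑ e ∈ B, ξ₂ e := by
    simp only [g, Finset.sum_add_distrib, Finset.sum_ite_mem, Finset.union_inter_cancel_left,
      Finset.union_inter_cancel_right]
  have hg : ∀ e ∈ A ∪ B, g e = c e :=
    (Finset.sum_eq_sum_iff_of_le hgc).mp (le_antisymm (Finset.sum_le_sum hgc) (hsum ▸ hcost))
  refine ⟨fun e he => ?_, fun e heA heB => by simpa [g, heA, heB] using hg e (by simp [heA])⟩
  have hge := hg e he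
  have := hcap e he
  by_cases hA : e ∈ A <;> by_cases hB : e ∈ B <;> simp [g, hA, hB] at he hge <;>
    linarith [h₁ e, h₂ e]

theorem nbc1_properties_general
    (G : SimpleGraph V) (u v w x : V) (c : Sym2 V → ℝ)
    (hc : ∀ e, 0 ≤ c e)
    (B : PBC G u v w x)
    (hOpt : IsOptimalSteinerForest G u v w x c
      (B.Pu.edges.toFinset ∪ B.Pl.edges.toFinset))
    (ξu ξl : Sym2 V → ℝ)
    (hFeas : Feasible2 G c B.Pu B.Pl ξu ξl)
    (ht1 : walkCost c B.q1 = ∑ e ∈ B.S1.edges.toFinset, ξu e)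
    (ht3 : walkCost c B.q3 = ∑ e ∈ B.S3.edges.toFinset, ξl e)
    (hNBC1 : B.NBC1) :
    (∀ e, e ∈ B.S1.edges ∨ e ∈ B.S3.edges → ξu e + ξl e = c e) ∧
    (∀ e ∈ B.M.edges, e ∈ B.S1.edges → e ∉ B.S3.edges → ξu e = c e) := by
  obtain ⟨hsmall, s, hs₁, hs₃⟩ := hNBC1
  obtain ⟨hξu, hξl, -, -, hcap, -, -⟩ := hFeas
  have hS : B.S1.edges.toFinset ∪ B.S3.edges.toFinset ⊆
      B.Pu.edges.toFinset ∪ B.Pl.edges.toFinset := by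
    simpa [Finset.subset_iff] using fun e he =>
      he.imp PBC.mem_Pu_of_mem_S1 PBC.mem_Pl_of_mem_S3
  have hQ : ↑(B.q1.edges.toFinset ∪ B.q3.edges.toFinset) ⊆ G.edgeSet := by
    simpa [Set.subset_def] using fun e he =>
      he.elim (B.q1.edges_subset_edgeSet ·) (B.q3.edges_subset_edgeSet ·)
  have hreach := PBC.reachable_of_rerouting hsmall hs₁ hs₃
    (K := ↑((B.Pu.edges.toFinset ∪ B.Pl.edges.toFinset) \
      (B.S1.edges.toFinset ∪ B.S3.edges.toFinset) ∪ (B.q1.edges.toFinset ∪ B.q3.edges.toFinset)))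
    (fun e he => by simpa [PBC.keptEdges] using .inl he) (by simp +contextual)
    (by simp +contextual)
  have hcost : cost c (B.S1.edges.toFinset ∪ B.S3.edges.toFinset) ≤
      ∑ e ∈ B.S1.edges.toFinset, ξu e + ∑ e ∈ B.S3.edges.toFinset, ξl e :=
    calc _ ≤ cost c (B.q1.edges.toFinset ∪ B.q3.edges.toFinset) :=
          hOpt.cost_le_of_reachable hc hS hQ hreach.1 hreach.2
      _ ≤ walkCost c B.q1 + walkCost c B.q3 := cost_union_le hc _ _
      _ = _ := by rw [ht1, ht3]
  obtain ⟨hpaid, hfull⟩ := shares_eq_cost_of_cost_le hξu hξl (fun e he => hcap e (hS he)) hcost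
  exact ⟨fun e he => hpaid e (by simpa using he),
    fun e _ h₁ h₃ => hfull e (by simpa using h₁) (by simpa using h₃)⟩

/-- properties of NBC1.  In an NBC1 configuration whose
underlying paths form an optimal Steiner forest and whose three paths
`q₁, q₂, q₃` are tight alternatives with respect to a feasible LP(F)
cost-share assignment in which all commonly used edges are completely paid:
(i) every edge substituted by `q₁` or by `q₃` is completely paid;
(ii) the player with terminal pair `(u,v)` fully pays every commonly used edge
that is substituted by `q₁` but not by `q₃`. -/
theorem nbc1_properties
    [Fintype V] (G : SimpleGraph V) (u v w x : V) (c : Sym2 V → ℝ)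
    (hc : ∀ e, 0 ≤ c e)
    (B : PBC G u v w x)
    (hOpt : IsOptimalSteinerForest G u v w x c
      (B.Pu.edges.toFinset ∪ B.Pl.edges.toFinset))
    (ξu ξl : Sym2 V → ℝ)
    (hFeas : Feasible2 G c B.Pu B.Pl ξu ξl)
    (hPaidM : ∀ e ∈ B.M.edges, ξu e + ξl e = c e)
    (ht1 : walkCost c B.q1 = ∑ e ∈ B.S1.edges.toFinset, ξu e)
    (ht2 : walkCost c B.q2 = ∑ e ∈ B.S2.edges.toFinset, ξl e)
    (ht3 : walkCost c B.q3 = ∑ e ∈ B.S3.edges.toFinset, ξl e)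
    (hNBC1 : B.NBC1) :
    (∀ e, e ∈ B.S1.edges ∨ e ∈ B.S3.edges → ξu e + ξl e = c e) ∧
    (∀ e ∈ B.M.edges, e ∈ B.S1.edges → e ∉ B.S3.edges → ξu e = c e) :=
  nbc1_properties_general G u v w x c hc B hOpt ξu ξl hFeas ht1 ht3 hNBC1

end NDG
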